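/- arXiv:1110.6560 — 4 statements merged into one kernel-verified Lean document; each statement's English description precedes it below -/
import Mathlib

section
/- Fix integers n ≥ 1, m ≥ 1, N = n + m, an integer k with 2 ≤ k ≤ m + 1, and an injective function r : Fin N → ℝ. Let Z be a uniformly random n-element subset of Fin N, and let T(Z) be the number of pairs (i, S) with i ∈ Z, S a (k−1)-element subset of the complement of Z, and r i > r j for all j ∈ S. Then E[T(Z)] = n · (1/(m+1)) · Σ_{j=0}^{m} C(j, k−1) = n · C(m+1, k) / (m+1). -/
/-!
Double count the triples `(Z, i, S)` with `i ∈ Z`, `S ⊆ Zᶜ` and `r` below `r i` on `S`.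
Such a pair `(i, S)` is determined by the `k`-set `insert i S`, of which `i` is the `r`-maximum,
so there are `C(N, k)` of them, and each is counted for exactly the `C(N - k, n - 1)` sets `Z`
containing `i` and avoiding `S`. Hence `∑ T = C(N, k) C(N - k, n - 1) = C(N, n - 1) C(m + 1, k)`,
and `(m + 1) C(N, n - 1) = n C(N, n)`; finally `∑_{j ≤ m} C(j, k - 1) = C(m + 1, k)` (hockey stick).
-/

open Finset

theorem Nat.sum_range_choose_eq_choose_succ (m c : ℕ) :
    ∑ j ∈ range m, j.choose c = m.choose (c + 1) := by
  induction m with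
  | zero => simp
  | succ m ih => rw [sum_range_succ, ih, Nat.choose_succ_succ', add_comm]

theorem Nat.choose_mul_choose_sub_comm (N a b : ℕ) :
    N.choose a * (N - a).choose b = N.choose b * (N - b).choose a := by
  have ha := Nat.choose_mul (n := N) (k := a + b) (s := a) (Nat.le_add_right a b)
  have hb := Nat.choose_mul (n := N) (k := a + b) (s := b) (Nat.le_add_left b a)
  rw [Nat.add_sub_cancel_left] at ha
  rw [Nat.add_sub_cancel] at hb
  rw [← ha, ← hb, Nat.choose_symm_add]

theorem Nat.cast_choose_mul_choose_div_choose (a m k : ℕ) :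
    ((a + 1 + m).choose k * (a + 1 + m - k).choose a : ℚ) / (a + 1 + m).choose (a + 1)
      = (a + 1) * (m + 1).choose k / (m + 1) := by
  have hsucc := Nat.choose_succ_right_eq (a + 1 + m) a
  rw [show a + 1 + m - a = m + 1 by omega] at hsucc
  have hswap : (a + 1 + m).choose k * (a + 1 + m - k).choose a
      = (a + 1 + m).choose a * (m + 1).choose k := by
    rw [Nat.choose_mul_choose_sub_comm, show a + 1 + m - a = m + 1 by omega]
  rw [← Nat.cast_mul, hswap, Nat.cast_mul]
  have hne : ((a + 1 + m).choose (a + 1) : ℚ) ≠ 0 := by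
    exact_mod_cast (Nat.choose_pos (by omega)).ne'
  have hsuccQ : ((a + 1 + m).choose (a + 1) : ℚ) * (a + 1) = (a + 1 + m).choose a * (m + 1) := by
    exact_mod_cast hsucc
  rw [div_eq_div_iff hne (by positivity)]
  linear_combination (-((m + 1).choose k : ℚ)) * hsuccQ

section

variable {α : Type*} [DecidableEq α]

theorem Finset.card_filter_mem_powersetCard_succ {s : Finset α} {i : α} (hi : i ∈ s) (n : ℕ) :
    #{Z ∈ powersetCard (n + 1) s | i ∈ Z} = (#s - 1).choose n := by
  rw [← card_erase_of_mem hi, ← card_powersetCard]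
  refine card_nbij' (·.erase i) (insert i ·) ?_ ?_ ?_ ?_
  · intro Z hZ
    simp only [mem_coe, mem_filter, mem_powersetCard] at hZ
    simp only [mem_coe, mem_powersetCard]
    exact ⟨erase_subset_erase i hZ.1.1, by rw [card_erase_of_mem hZ.2, hZ.1.2]; rfl⟩
  · intro W hW
    simp only [mem_coe, mem_powersetCard] at hW
    have hiW : i ∉ W := fun h => by simpa using hW.1 h
    simp only [mem_coe, mem_filter, mem_powersetCard]
    refine ⟨⟨insert_subset hi (hW.1.trans (erase_subset i s)), ?_⟩, mem_insert_self i W⟩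
    rw [card_insert_of_notMem hiW, hW.2]
  · intro Z hZ
    simp only [mem_coe, mem_filter] at hZ
    exact insert_erase hZ.2
  · intro W hW
    simp only [mem_coe, mem_powersetCard] at hW
    exact erase_insert fun h => by simpa using hW.1 h

variable [Fintype α]

theorem Finset.card_filter_mem_subset_compl {S : Finset α} {i : α} (hiS : i ∉ S) (n : ℕ) :
    #{Z ∈ powersetCard (n + 1) (univ : Finset α) | i ∈ Z ∧ S ⊆ Zᶜ}
      = (Fintype.card α - (#S + 1)).choose n := by
  have hfilter : {Z ∈ powersetCard (n + 1) (univ : Finset α) | i ∈ Z ∧ S ⊆ Zᶜ}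
      = {Z ∈ powersetCard (n + 1) Sᶜ | i ∈ Z} := by
    ext Z
    simp only [mem_filter, mem_powersetCard, subset_univ, true_and, subset_compl_comm]
    tauto
  rw [hfilter, card_filter_mem_powersetCard_succ (mem_compl.2 hiS), card_compl, Nat.sub_sub]

variable {β : Type*} [LinearOrder β] {r : α → β}

theorem Finset.card_filter_forall_lt_eq_choose (hr : Function.Injective r) (k : ℕ) :
    #{p ∈ (univ : Finset α) ×ˢ powersetCard k (univ : Finset α) | ∀ j ∈ p.2, r j < r p.1}
      = (Fintype.card α).choose (k + 1) := by
  rw [← card_univ (α := α), ← card_powersetCard]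
  refine card_bij (fun p _ => insert p.1 p.2) ?_ ?_ ?_
  · rintro ⟨i, S⟩ hp
    simp only [mem_filter, mem_product, mem_powersetCard] at hp ⊢
    have hiS : i ∉ S := fun h => lt_irrefl _ (hp.2 i h)
    exact ⟨subset_univ _, by rw [card_insert_of_notMem hiS, hp.1.2.2]⟩
  · rintro ⟨i, S⟩ hp ⟨i', S'⟩ hp' h
    simp only [mem_filter, mem_product, mem_powersetCard] at hp hp' h
    have hi : i = i' := by
      by_contra hne
      have hiS' : i ∈ S' := (mem_insert.1 (h ▸ mem_insert_self i S)).resolve_left hne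
      have hi'S : i' ∈ S :=
        (mem_insert.1 (h ▸ mem_insert_self i' S')).resolve_left (Ne.symm hne)
      exact (hp'.2 i hiS').asymm (hp.2 i' hi'S)
    subst hi
    have hS : S = S' := by
      rw [← erase_insert (fun h => lt_irrefl _ (hp.2 i h)),
        ← erase_insert (fun h => lt_irrefl _ (hp'.2 i h)), h]
    rw [hS]
  · intro K hK
    rw [mem_powersetCard] at hK
    obtain ⟨i, hiK, hmax⟩ := K.exists_max_image r (card_pos.1 (by omega))
    refine ⟨(i, K.erase i), ?_, insert_erase hiK⟩
    simp only [mem_filter, mem_product, mem_powersetCard, mem_erase]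
    refine ⟨⟨mem_univ i, subset_univ _, by rw [card_erase_of_mem hiK, hK.2]; rfl⟩, ?_⟩
    exact fun j hj => (hmax j hj.2).lt_of_ne fun h => hj.1 (hr h)

theorem Finset.sum_card_filter_forall_lt (hr : Function.Injective r) (n k : ℕ) :
    ∑ Z ∈ powersetCard (n + 1) (univ : Finset α),
      #{p ∈ Z ×ˢ Zᶜ.powersetCard k | ∀ j ∈ p.2, r j < r p.1}
      = (Fintype.card α).choose (k + 1) * (Fintype.card α - (k + 1)).choose n := by
  set good :=
    {p ∈ (univ : Finset α) ×ˢ powersetCard k (univ : Finset α) | ∀ j ∈ p.2, r j < r p.1}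
  let inside (Z : Finset α) (p : α × Finset α) : Prop := p.1 ∈ Z ∧ p.2 ⊆ Zᶜ
  have habove (Z : Finset α) : {p ∈ Z ×ˢ Zᶜ.powersetCard k | ∀ j ∈ p.2, r j < r p.1}
      = good.bipartiteAbove inside Z := by
    ext p
    simp only [good, inside, mem_bipartiteAbove, mem_filter, mem_product, mem_powersetCard,
      mem_univ, subset_univ, true_and]
    tauto
  have hbelow : ∀ p ∈ good, #((powersetCard (n + 1) univ).bipartiteBelow inside p)
      = (Fintype.card α - (k + 1)).choose n := by
    rintro ⟨i, S⟩ hp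
    simp only [good, mem_filter, mem_product, mem_powersetCard] at hp
    rw [← hp.1.2.2]
    exact card_filter_mem_subset_compl (fun h => lt_irrefl _ (hp.2 i h)) n
  simp_rw [habove]
  rw [sum_card_bipartiteAbove_eq_sum_card_bipartiteBelow, sum_congr rfl hbelow, sum_const,
    smul_eq_mul, card_filter_forall_lt_eq_choose hr]

end

theorem expectation_of_statistic_general
    (n m N k : ℕ) (hn : 1 ≤ n) (hN : N = n + m)
    (hk2 : 2 ≤ k)
    (r : Fin N → ℝ) (hr : Function.Injective r)
    (T : Finset (Fin N) → ℕ)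
    (hT : ∀ Z : Finset (Fin N),
      T Z = ((Z ×ˢ (Zᶜ.powersetCard (k - 1))).filter
        (fun p => ∀ j ∈ p.2, r j < r p.1)).card) :
    (∑ Z ∈ (Finset.univ : Finset (Fin N)).powersetCard n, (T Z : ℚ))
        / (N.choose n : ℚ)
      = (n : ℚ) * ((1 : ℚ) / (m + 1))
          * ∑ j ∈ Finset.range (m + 1), (j.choose (k - 1) : ℚ)
    ∧ (n : ℚ) * ((1 : ℚ) / (m + 1))
          * ∑ j ∈ Finset.range (m + 1), (j.choose (k - 1) : ℚ)
      = (n : ℚ) * ((m + 1).choose k : ℚ) / ((m : ℚ) + 1) := by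
  obtain ⟨a, rfl⟩ : ∃ a, n = a + 1 := ⟨n - 1, by omega⟩
  obtain ⟨c, rfl⟩ : ∃ c, k = c + 1 := ⟨k - 1, by omega⟩
  subst hN
  have hsum : ∑ Z ∈ powersetCard (a + 1) univ, T Z
      = (a + 1 + m).choose (c + 1) * (a + 1 + m - (c + 1)).choose a := by
    simp only [hT, Nat.add_sub_cancel]
    -- `convert` also reconciles the classical decidability instance of `<` on `ℝ`.
    convert sum_card_filter_forall_lt hr a c <;> rw [Fintype.card_fin]
  rw [← Nat.cast_sum, hsum, Nat.add_sub_cancel, ← Nat.cast_sum,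
    Nat.sum_range_choose_eq_choose_succ]
  refine ⟨?_, by ring⟩
  rw [Nat.cast_mul, Nat.cast_choose_mul_choose_div_choose]
  push_cast
  ring

/-- Expectation of the statistic `T(Z)` under a uniformly random `n`-element
treated subset `Z` of `Fin N`, `N = n + m`:
`E[T(Z)] = n · (1/(m+1)) · Σ_{j=0}^{m} C(j, k−1) = n · C(m+1, k) / (m+1)`. -/
theorem expectation_of_statistic
    (n m N k : ℕ) (hn : 1 ≤ n) (hm : 1 ≤ m) (hN : N = n + m)
    (hk2 : 2 ≤ k) (hkm : k ≤ m + 1)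
    (r : Fin N → ℝ) (hr : Function.Injective r)
    (T : Finset (Fin N) → ℕ)
    (hT : ∀ Z : Finset (Fin N),
      T Z = ((Z ×ˢ (Zᶜ.powersetCard (k - 1))).filter
        (fun p => ∀ j ∈ p.2, r j < r p.1)).card) :
    (∑ Z ∈ (Finset.univ : Finset (Fin N)).powersetCard n, (T Z : ℚ))
        / (N.choose n : ℚ)
      = (n : ℚ) * ((1 : ℚ) / (m + 1))
          * ∑ j ∈ Finset.range (m + 1), (j.choose (k - 1) : ℚ)
    ∧ (n : ℚ) * ((1 : ℚ) / (m + 1))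
          * ∑ j ∈ Finset.range (m + 1), (j.choose (k - 1) : ℚ)
      = (n : ℚ) * ((m + 1).choose k : ℚ) / ((m : ℚ) + 1) :=
  expectation_of_statistic_general n m N k hn hN hk2 r hr T hT
end

section
/- Fix integers n ≥ 1, m ≥ 1, N = n + m, and an integer k with 2 ≤ k ≤ m + 1. For an injective function r : Fin N → ℝ and an n-element subset Z ⊆ Fin N, let T_r(Z) be the number of pairs (i, S) with i ∈ Z, S a (k−1)-element subset of the complement of Z, and r i > r j for all j ∈ S. Then for any two injective functions r, r' : Fin N → ℝ, the random variables T_r(Z) and T_{r'}(Z), with Z a uniformly random n-element subset of Fin N, have the same distribution; that is, for every natural number t, the number of n-element subsets Z with T_r(Z) = t equals the number of n-element subsets Z with T_{r'}(Z) = t. -/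
open Finset

lemma map_symm_map {α : Type*} [DecidableEq α] (σ : Equiv.Perm α) (S : Finset α) :
    (S.map σ.toEmbedding).map σ.symm.toEmbedding = S := by
  ext x
  constructor
  · intro hx
    obtain ⟨a, ha, rfl⟩ := Finset.mem_map.mp hx
    obtain ⟨b, hb, rfl⟩ := Finset.mem_map.mp ha
    simpa using hb
  · intro hx
    exact Finset.mem_map.mpr ⟨σ x, Finset.mem_map_of_mem _ hx, by simp⟩

lemma map_map_symm {α : Type*} [DecidableEq α] (σ : Equiv.Perm α) (S : Finset α) :
    (S.map σ.symm.toEmbedding).map σ.toEmbedding = S := by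
  simpa using map_symm_map σ.symm S

/-- Rank-matching permutation. -/
lemma exists_rank_perm {N : ℕ} (r r' : Fin N → ℝ)
    (hr : Function.Injective r) (hr' : Function.Injective r') :
    ∃ σ : Equiv.Perm (Fin N), ∀ i j, (r (σ i) < r (σ j) ↔ r' i < r' j) := by
  have hs : (Finset.image r Finset.univ).card = N := by
    rw [Finset.card_image_of_injective _ hr, card_univ, Fintype.card_fin]
  have hs' : (Finset.image r' Finset.univ).card = N := by
    rw [Finset.card_image_of_injective _ hr', card_univ, Fintype.card_fin]
  set e := (Finset.image r Finset.univ).orderIsoOfFin hs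
  set e' := (Finset.image r' Finset.univ).orderIsoOfFin hs'
  let f : Fin N → Fin N := fun i => e.symm ⟨r i, by simp⟩
  let f' : Fin N → Fin N := fun i => e'.symm ⟨r' i, by simp⟩
  have hf : ∀ i j, f i < f j ↔ r i < r j := by
    intro i j
    show e.symm _ < e.symm _ ↔ _
    rw [OrderIso.lt_iff_lt]
    exact Iff.rfl
  have hf' : ∀ i j, f' i < f' j ↔ r' i < r' j := by
    intro i j
    show e'.symm _ < e'.symm _ ↔ _
    rw [OrderIso.lt_iff_lt]
    exact Iff.rfl
  have hfi : Function.Injective f := fun i j h => by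
    have : r i = r j := Subtype.ext_iff.mp (e.symm.injective h)
    exact hr this
  have hfi' : Function.Injective f' := fun i j h => by
    have : r' i = r' j := Subtype.ext_iff.mp (e'.symm.injective h)
    exact hr' this
  let φ := Equiv.ofBijective f (Finite.injective_iff_bijective.mp hfi)
  let φ' := Equiv.ofBijective f' (Finite.injective_iff_bijective.mp hfi')
  refine ⟨φ'.trans φ.symm, fun i j => ?_⟩
  have h1 : ∀ x, f (φ.symm x) = x := fun x => φ.apply_symm_apply x
  rw [← hf]
  simp only [Equiv.trans_apply]
  rw [h1, h1]
  exact hf' i j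

lemma T_map {N k : ℕ} (r r' : Fin N → ℝ) (σ : Equiv.Perm (Fin N))
    (hσ : ∀ i j, (r (σ i) < r (σ j) ↔ r' i < r' j)) (Z : Finset (Fin N)) :
    ((Z.map σ.toEmbedding ×ˢ ((Z.map σ.toEmbedding)ᶜ.powersetCard (k - 1))).filter
        (fun p => ∀ j ∈ p.2, r j < r p.1)).card
      = ((Z ×ˢ (Zᶜ.powersetCard (k - 1))).filter
        (fun p => ∀ j ∈ p.2, r' j < r' p.1)).card := by
  have hcompl : (Z.map σ.toEmbedding)ᶜ = Zᶜ.map σ.toEmbedding := by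
    ext x
    simp only [mem_compl, mem_map, Equiv.coe_toEmbedding]
    constructor
    · intro h
      exact ⟨σ.symm x, fun hmem => h ⟨σ.symm x, hmem, by simp⟩, by simp⟩
    · rintro ⟨a, ha, rfl⟩ ⟨b, hb, hba⟩
      exact ha (σ.injective hba ▸ hb)
  symm
  apply Finset.card_bij (fun p _ => (σ p.1, p.2.map σ.toEmbedding))
  · rintro ⟨i, S⟩ hp
    simp only [mem_filter, mem_product, mem_powersetCard] at hp ⊢
    obtain ⟨⟨hi, hS, hScard⟩, hlt⟩ := hp
    refine ⟨⟨mem_map_of_mem _ hi, ?_, ?_⟩, ?_⟩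
    · rw [hcompl]; exact map_subset_map.mpr hS
    · rw [card_map]; exact hScard
    · intro j hj
      simp only [mem_map, Equiv.coe_toEmbedding] at hj
      obtain ⟨a, ha, rfl⟩ := hj
      exact (hσ a i).mpr (hlt a ha)
  · rintro ⟨i, S⟩ hp ⟨i', S'⟩ hp' h
    simp only [Prod.mk.injEq] at h
    obtain ⟨h1, h2⟩ := h
    have hii : i = i' := σ.injective h1
    have hSS : S = S' := Finset.map_injective _ h2
    rw [hii, hSS]
  · rintro ⟨i, S⟩ hp
    simp only [mem_filter, mem_product, mem_powersetCard, hcompl] at hp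
    obtain ⟨⟨hi, hS, hScard⟩, hlt⟩ := hp
    obtain ⟨i0, hi0, rfl⟩ := mem_map.mp hi
    refine ⟨(i0, S.map σ.symm.toEmbedding), ?_, ?_⟩
    · simp only [mem_filter, mem_product, mem_powersetCard]
      refine ⟨⟨hi0, ?_, by rw [card_map]; exact hScard⟩, ?_⟩
      · intro x hx
        obtain ⟨a, ha, rfl⟩ := Finset.mem_map.mp hx
        obtain ⟨b, hb, rfl⟩ := Finset.mem_map.mp (hS ha)
        simpa using hb
      · intro j hj
        obtain ⟨a, ha, rfl⟩ := Finset.mem_map.mp hj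
        obtain ⟨b, hb, rfl⟩ := Finset.mem_map.mp (hS ha)
        have := (hσ b i0).mp (hlt _ ha)
        simpa using this
    · have : (S.map σ.symm.toEmbedding).map σ.toEmbedding = S := map_map_symm σ S
      simp only [Prod.mk.injEq]
      exact ⟨rfl, this⟩

/-- Distribution-free property: in the absence of ties, the null randomization
distribution of `T_r(Z)` over uniformly random `n`-element subsets `Z` does not
depend on the (injective) responses `r`. -/
theorem statistic_distribution_free
    (n m N k : ℕ) (hn : 1 ≤ n) (hm : 1 ≤ m) (hN : N = n + m)
    (hk2 : 2 ≤ k) (hkm : k ≤ m + 1)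
    (r r' : Fin N → ℝ) (hr : Function.Injective r) (hr' : Function.Injective r')
    (T : (Fin N → ℝ) → Finset (Fin N) → ℕ)
    (hT : ∀ (s : Fin N → ℝ) (Z : Finset (Fin N)),
      T s Z = ((Z ×ˢ (Zᶜ.powersetCard (k - 1))).filter
        (fun p => ∀ j ∈ p.2, s j < s p.1)).card) :
    ∀ t : ℕ,
      ((((Finset.univ : Finset (Fin N)).powersetCard n).filter
          (fun Z => T r Z = t)).card)
        = ((((Finset.univ : Finset (Fin N)).powersetCard n).filter
          (fun Z => T r' Z = t)).card) := by
  intro t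
  obtain ⟨σ, hσ⟩ := exists_rank_perm r r' hr hr'
  apply Finset.card_bij (fun Z _ => Z.map σ.symm.toEmbedding)
  · intro Z hZ
    simp only [mem_filter, mem_powersetCard] at hZ ⊢
    obtain ⟨⟨-, hcard⟩, ht⟩ := hZ
    refine ⟨⟨subset_univ _, by rw [card_map]; exact hcard⟩, ?_⟩
    rw [hT] at ht ⊢
    have := T_map (k := k) r r' σ hσ (Z.map σ.symm.toEmbedding)
    rw [map_map_symm] at this
    rw [← this, ht]
  · intro Z hZ Z' hZ' h
    exact Finset.map_injective _ h
  · intro Z hZ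
    simp only [mem_filter, mem_powersetCard] at hZ
    obtain ⟨⟨-, hcard⟩, ht⟩ := hZ
    refine ⟨Z.map σ.toEmbedding, ?_, map_symm_map σ Z⟩
    simp only [mem_filter, mem_powersetCard]
    refine ⟨⟨subset_univ _, by rw [card_map]; exact hcard⟩, ?_⟩
    rw [hT] at ht ⊢
    rw [T_map r r' σ hσ Z, ht]
end

section
/- Fix integers n ≥ 1, m ≥ 1, N = n + m, and an injective function r : Fin N → ℝ. For an n-element subset Z ⊆ Fin N, let p(Z) ∈ (Fin (m+1))^n be the nondecreasing rearrangement of the placements { |{ j ∉ Z : r j < r i }| : i ∈ Z }. Then the map Z ↦ p(Z) is a bijection from the n-element subsets of Fin N onto the nondecreasing n-tuples (u_1 ≤ u_2 ≤ … ≤ u_n) with entries in {0, 1, …, m}; consequently, when Z is uniform over n-element subsets, every such nondecreasing tuple of placements occurs with probability exactly 1 / C(N, n). -/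
open Finset

/-!
Ranking the units by response reduces everything to `Fin N` with its natural order.
If `w₀ < ⋯ < w_{n-1}` are the ranks of the treated units, exactly `t` treated units lie below
`w_t`, so its placement is `w_t - t`. Hence the sorted placements are `u_t = w_t - t`, and
`W ↦ (w_t - t)_t` is the stars-and-bars bijection between `n`-subsets of `Fin (n + m)` and
nondecreasing `n`-tuples in `{0, …, m}`, with inverse `u ↦ {t + u_t}`. Each fibre of the uniform
law on `n`-subsets is therefore a single point.
-/

theorem Multiset.sort_map_of_monotone {α β : Type*} [LinearOrder α] [LinearOrder β]
    (s : Multiset α) {f : α → β} (hf : Monotone f) :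
    (s.map f).sort (· ≤ ·) = (s.sort (· ≤ ·)).map f := by
  refine List.Perm.eq_of_pairwise' (Multiset.pairwise_sort _ _)
    (List.pairwise_map.2 ((Multiset.pairwise_sort _ _).imp (hf ·))) ?_
  rw [← Multiset.coe_eq_coe, Multiset.sort_eq, ← Multiset.map_coe, Multiset.sort_eq]

namespace Finset

theorem card_filter_lt_orderEmbOfFin {α : Type*} [LinearOrder α] {n : ℕ}
    (W : Finset α) (hW : #W = n) (k : Fin n) :
    #(W.filter (· < W.orderEmbOfFin hW k)) = k := by
  set e := W.orderEmbOfFin hW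
  have : W.filter (· < e k) = (Iio k).map e.toEmbedding := by
    rw [← W.map_orderEmbOfFin_univ hW, filter_map]
    ext; simp [e]
  rw [this, card_map, Fin.card_Iio]

theorem card_filter_lt_add_card_compl_filter_lt {N : ℕ} (W : Finset (Fin N)) (x : Fin N) :
    #(W.filter (· < x)) + #(Wᶜ.filter (· < x)) = x := by
  rw [← card_union_of_disjoint (disjoint_filter_filter disjoint_compl_right), ← filter_union,
    union_compl, ← Fin.card_Iio]
  congr 1
  ext; simp

variable {N : ℕ}

def placements (W : Finset (Fin N)) (n : ℕ) (t : Fin n) : ℕ :=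
  ((W.sort (· ≤ ·)).map fun x => #(Wᶜ.filter (· < x))).getD t 0

theorem placements_apply {n : ℕ} {W : Finset (Fin N)} (hW : #W = n) (t : Fin n) :
    W.placements n t = #(Wᶜ.filter (· < W.orderEmbOfFin hW t)) := by
  rw [placements, List.getD_eq_getElem _ _ (by simp [hW]), List.getElem_map,
    orderEmbOfFin_apply]
  rfl

theorem val_orderEmbOfFin {n : ℕ} {W : Finset (Fin N)} (hW : #W = n) (t : Fin n) :
    (W.orderEmbOfFin hW t : ℕ) = t + W.placements n t := by
  rw [placements_apply hW, ← W.card_filter_lt_orderEmbOfFin hW t,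
    card_filter_lt_add_card_compl_filter_lt]

variable {n m : ℕ}

theorem mapsTo_placements :
    Set.MapsTo (placements · n) {W : Finset (Fin (n + m)) | #W = n}
      {u | Monotone u ∧ ∀ t, u t ≤ m} := by
  intro W (hW : #W = n)
  refine ⟨fun a b hab => ?_, fun t => ?_⟩
  · simp only [placements_apply hW]
    exact card_le_card <| monotone_filter_right _ fun _ _ hx =>
      hx.trans_le ((W.orderEmbOfFin hW).monotone hab)
  · calc W.placements n t ≤ #Wᶜ := placements_apply hW t ▸ card_filter_le _ _
      _ = m := by rw [card_compl, hW, Fintype.card_fin]; omega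

theorem injOn_placements :
    Set.InjOn (placements · n) {W : Finset (Fin N) | #W = n} := by
  intro W (hW : #W = n) W' (hW' : #W' = n) (h : W.placements n = W'.placements n)
  have : ⇑(W.orderEmbOfFin hW) = W'.orderEmbOfFin hW' := by
    funext t
    exact Fin.ext <| by rw [val_orderEmbOfFin, val_orderEmbOfFin, h]
  apply coe_injective
  rw [← range_orderEmbOfFin W hW, ← range_orderEmbOfFin W' hW', this]

theorem surjOn_placements :
    Set.SurjOn (placements · n) {W : Finset (Fin (n + m)) | #W = n}
      {u | Monotone u ∧ ∀ t, u t ≤ m} := by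
  rintro u ⟨hmono, hbd⟩
  let v : Fin n → Fin (n + m) := fun t => ⟨t + u t, by have := hbd t; omega⟩
  have hv : StrictMono v := fun a b hab => by
    have : u a ≤ u b := hmono hab.le
    simp only [v, Fin.mk_lt_mk]
    omega
  let W := univ.map (OrderEmbedding.ofStrictMono v hv).toEmbedding
  have hW : #W = n := by simp [W]
  refine ⟨W, hW, show W.placements n = u from funext fun t => ?_⟩
  have := val_orderEmbOfFin hW t
  rw [← orderEmbOfFin_unique hW (by simp [W]) hv] at this
  simp only [v] at this
  omega

theorem bijOn_placements :
    Set.BijOn (placements · n) {W : Finset (Fin (n + m)) | #W = n}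
      {u | Monotone u ∧ ∀ t, u t ≤ m} :=
  ⟨mapsTo_placements, injOn_placements, surjOn_placements⟩

end Finset

theorem exists_equiv_lt_iff_lt {N : ℕ} {β : Type*} [LinearOrder β] {r : Fin N → β}
    (hr : Function.Injective r) : ∃ ρ : Fin N ≃ Fin N, ∀ i j, r i < r j ↔ ρ i < ρ j := by
  let σ := Tuple.sort r
  have hs : StrictMono (r ∘ σ) :=
    (Tuple.monotone_sort r).strictMono_of_injective (hr.comp σ.injective)
  refine ⟨σ.symm, fun i j => ?_⟩
  conv_lhs => rw [← σ.apply_symm_apply i, ← σ.apply_symm_apply j]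
  exact hs.lt_iff_lt

section Placements

variable {ι α β : Type*} [Fintype ι] [DecidableEq ι] [Fintype α] [DecidableEq α]
  [LinearOrder α] [LinearOrder β] {r : ι → β} {ρ : ι ≃ α}

theorem card_compl_filter_lt_eq_of_equiv (hρ : ∀ i j, r i < r j ↔ ρ i < ρ j)
    (Z : Finset ι) (i : ι) :
    #(Zᶜ.filter (r · < r i)) = #((Z.map ρ.toEmbedding)ᶜ.filter (· < ρ i)) :=
  card_equiv ρ fun j => by simp [hρ]

theorem sort_placements_eq_of_equiv (hρ : ∀ i j, r i < r j ↔ ρ i < ρ j) (Z : Finset ι) :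
    (Z.val.map fun i => #(Zᶜ.filter (r · < r i))).sort (· ≤ ·)
      = ((Z.map ρ.toEmbedding).sort (· ≤ ·)).map
          fun x => #((Z.map ρ.toEmbedding)ᶜ.filter (· < x)) := by
  set W := Z.map ρ.toEmbedding
  have hmono : Monotone fun x => #(Wᶜ.filter (· < x)) := fun x y hxy =>
    card_le_card <| monotone_filter_right _ fun _ _ h => h.trans_le hxy
  have : (Z.val.map fun i => #(Zᶜ.filter (r · < r i)))
      = W.val.map fun x => #(Wᶜ.filter (· < x)) := by
    rw [map_val, Multiset.map_map]
    exact Multiset.map_congr rfl fun i _ => card_compl_filter_lt_eq_of_equiv hρ Z i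
  rw [this, Multiset.sort_map_of_monotone _ hmono, sort_val]

end Placements

theorem card_filter_eq_one_of_bijOn {α β : Type*} {s : Set α} {t : Set β} {f : α → β}
    (hf : Set.BijOn f s t) {S : Finset α} (hS : ∀ x, x ∈ S ↔ x ∈ s) {y : β} (hy : y ∈ t)
    [DecidablePred (f · = y)] : #(S.filter (f · = y)) = 1 := by
  obtain ⟨x, hx, rfl⟩ := hf.surjOn hy
  refine card_eq_one.2 ⟨x, ext fun z => ?_⟩
  simp only [mem_filter, mem_singleton, hS]
  exact ⟨fun ⟨hz, h⟩ => hf.injOn hz hx h, by rintro rfl; exact ⟨hx, rfl⟩⟩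

theorem placements_sorted_bijection_general
    (n m N : ℕ) (hN : N = n + m)
    (r : Fin N → ℝ) (hr : Function.Injective r)
    (p : Finset (Fin N) → (Fin n → ℕ))
    (hp : ∀ Z : Finset (Fin N), ∀ t : Fin n,
      p Z t = ((Z.val.map (fun i => ((Zᶜ).filter (fun j => r j < r i)).card)).sort
          (· ≤ ·)).getD t.val 0) :
    Set.BijOn p {Z : Finset (Fin N) | Z.card = n}
        {u : Fin n → ℕ | Monotone u ∧ ∀ t : Fin n, u t ≤ m}
    ∧ ∀ u : Fin n → ℕ, Monotone u → (∀ t : Fin n, u t ≤ m) →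
        ((((Finset.univ : Finset (Fin N)).powersetCard n).filter
            (fun Z => p Z = u)).card : ℚ) / (N.choose n : ℚ)
          = 1 / (N.choose n : ℚ) := by
  subst hN
  obtain ⟨ρ, hρ⟩ := exists_equiv_lt_iff_lt hr
  have hbij : Set.BijOn p {Z | #Z = n} {u | Monotone u ∧ ∀ t, u t ≤ m} := by
    refine (Finset.bijOn_placements.comp (ρ.finsetCongr.bijOn fun Z => by simp)).congr
      fun Z _ => funext fun t => ?_
    rw [hp, sort_placements_eq_of_equiv hρ]
    rfl
  refine ⟨hbij, fun u hu hbd => ?_⟩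
  rw [card_filter_eq_one_of_bijOn hbij (fun _ => mem_powersetCard_univ) ⟨hu, hbd⟩, Nat.cast_one]

/-- The map sending a treated subset `Z` to the nondecreasing rearrangement of its
placements is a bijection from the `n`-element subsets of `Fin N` onto the
nondecreasing `n`-tuples with entries in `{0, …, m}`; consequently each such tuple
of ordered placements occurs with probability exactly `1 / C(N, n)` under a
uniformly random `Z`. -/
theorem placements_sorted_bijection
    (n m N : ℕ) (hn : 1 ≤ n) (hm : 1 ≤ m) (hN : N = n + m)
    (r : Fin N → ℝ) (hr : Function.Injective r)
    (p : Finset (Fin N) → (Fin n → ℕ))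
    (hp : ∀ Z : Finset (Fin N), ∀ t : Fin n,
      p Z t = ((Z.val.map (fun i => ((Zᶜ).filter (fun j => r j < r i)).card)).sort
          (· ≤ ·)).getD t.val 0) :
    Set.BijOn p {Z : Finset (Fin N) | Z.card = n}
        {u : Fin n → ℕ | Monotone u ∧ ∀ t : Fin n, u t ≤ m}
    ∧ ∀ u : Fin n → ℕ, Monotone u → (∀ t : Fin n, u t ≤ m) →
        ((((Finset.univ : Finset (Fin N)).powersetCard n).filter
            (fun Z => p Z = u)).card : ℚ) / (N.choose n : ℚ)
          = 1 / (N.choose n : ℚ) :=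
  placements_sorted_bijection_general n m N hN r hr p hp
end

section
/- Fix integers n ≥ 1, m ≥ 1, N = n + m, and an injective function r : Fin N → ℝ. Let Z be a uniformly random n-element subset of Fin N. Then for every j ∈ {0, 1, …, m}, the expected number of treated units i ∈ Z whose placement p_i(Z) = |{ ℓ ∉ Z : r ℓ < r i }| equals j is n / (m + 1). -/
open Finset

/-!
Count pairs `(Z, i)` with `i ∈ Z` of placement `j`. The map `(Z, i) ↦ S = insert i Zᶜ` is a
bijection onto the `(m + 1)`-subsets of the units: within `S` the placement of `i` is its rank,
and the ranks of the elements of `S` are exactly `0, …, m`, so `i` is recovered as the unique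
element of rank `j`. Hence the numerator is `C(N, m + 1)`, and
`C(n + m, m + 1) (m + 1) = n C(n + m, n)`.
-/

section Rank

variable {α β : Type*} [LinearOrder β] {r : α → β}

def countBelow (r : α → β) (S : Finset α) (a : α) : ℕ := #{l ∈ S | r l < r a}

lemma countBelow_insert_self [DecidableEq α] (S : Finset α) (a : α) :
    countBelow r (insert a S) a = countBelow r S a := by
  simp [countBelow, filter_insert]

lemma countBelow_lt_card {S : Finset α} {a : α} (ha : a ∈ S) : countBelow r S a < #S :=
  card_lt_card (filter_ssubset.2 ⟨a, ha, lt_irrefl _⟩)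

lemma countBelow_lt_countBelow {S : Finset α} {a b : α} (ha : a ∈ S) (hab : r a < r b) :
    countBelow r S a < countBelow r S b := by
  refine card_lt_card ⟨monotone_filter_right _ fun _ _ hl => hl.trans hab, fun hsub => ?_⟩
  exact lt_irrefl _ (mem_filter.1 (hsub (mem_filter.2 ⟨ha, hab⟩))).2

lemma injOn_countBelow (hr : Function.Injective r) (S : Finset α) :
    Set.InjOn (countBelow r S) S := by
  intro a ha b hb hab
  by_contra hne
  rcases (hr.ne hne).lt_or_gt with hlt | hlt
  · exact (countBelow_lt_countBelow ha hlt).ne hab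
  · exact (countBelow_lt_countBelow hb hlt).ne' hab

lemma image_countBelow [DecidableEq α] (hr : Function.Injective r) (S : Finset α) :
    S.image (countBelow r S) = range #S :=
  eq_of_subset_of_card_le
    (fun _ hk => by
      obtain ⟨a, ha, rfl⟩ := mem_image.1 hk
      exact mem_range.2 (countBelow_lt_card ha))
    (by rw [card_image_of_injOn (injOn_countBelow hr S), card_range])

end Rank

section Placement

variable {α β : Type*} [Fintype α] [DecidableEq α] [LinearOrder β] {r : α → β}

lemma sum_card_countBelow_compl_eq_choose (hr : Function.Injective r) {n m j : ℕ}
    (hcard : Fintype.card α = n + m) (hj : j ≤ m) :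
    ∑ Z ∈ univ.powersetCard n, #{i ∈ Z | countBelow r Zᶜ i = j} =
      (n + m).choose (m + 1) := by
  rw [← card_sigma, ← hcard, ← card_univ, ← card_powersetCard]
  refine card_bij (fun x _ => insert x.2 x.1ᶜ) ?_ ?_ ?_
  · rintro ⟨Z, i⟩ hx
    simp only [mem_sigma, mem_powersetCard_univ, mem_filter] at hx ⊢
    rw [card_insert_of_notMem (notMem_compl.2 hx.2.1), card_compl, hx.1, hcard]
    omega
  · rintro ⟨Z, i⟩ hx ⟨Z', i'⟩ hx' hS
    simp only [mem_sigma, mem_powersetCard_univ, mem_filter] at hx hx' hS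
    have hi : i = i' := by
      refine injOn_countBelow hr (insert i Zᶜ) (mem_insert_self _ _)
        (hS ▸ mem_insert_self _ _) ?_
      rw [countBelow_insert_self, hS, countBelow_insert_self, hx.2.2, hx'.2.2]
    subst hi
    have hZ : Zᶜ = Z'ᶜ := by
      rw [← erase_insert (notMem_compl.2 hx.2.1), hS, erase_insert (notMem_compl.2 hx'.2.1)]
    rw [compl_injective hZ]
  · intro S hS
    rw [mem_powersetCard_univ] at hS
    have hjS : j ∈ S.image (countBelow r S) := by
      rw [image_countBelow hr, mem_range]
      omega
    obtain ⟨i, hiS, hij⟩ := mem_image.1 hjS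
    refine ⟨⟨(S.erase i)ᶜ, i⟩, ?_, by simp [insert_erase hiS]⟩
    simp only [mem_sigma, mem_powersetCard_univ, mem_filter, mem_compl, mem_erase, compl_compl]
    refine ⟨?_, by simp, ?_⟩
    · rw [card_compl, card_erase_of_mem hiS, hS, hcard]
      omega
    · rw [← countBelow_insert_self, insert_erase hiS, hij]

end Placement

lemma choose_add_succ_mul (n m : ℕ) :
    (n + m).choose (m + 1) * (m + 1) = n * (n + m).choose n := by
  rw [Nat.choose_succ_right_eq, Nat.add_sub_cancel, Nat.choose_symm_add, mul_comm]

theorem expected_count_placement_eq_general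
    (n m N : ℕ) (hN : N = n + m)
    (r : Fin N → ℝ) (hr : Function.Injective r)
    (j : ℕ) (hj : j ≤ m) :
    (∑ Z ∈ (Finset.univ : Finset (Fin N)).powersetCard n,
        ((Z.filter (fun i => ((Zᶜ).filter (fun l => r l < r i)).card = j)).card : ℚ))
        / (N.choose n : ℚ)
      = (n : ℚ) / ((m : ℚ) + 1) := by
  subst hN
  have hcount := sum_card_countBelow_compl_eq_choose hr (Fintype.card_fin (n + m)) hj
  have hchoose : (0 : ℚ) < (n + m).choose n := by
    exact_mod_cast Nat.choose_pos (Nat.le_add_right n m)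
  rw [div_eq_div_iff hchoose.ne' (by positivity)]
  exact_mod_cast (congrArg (· * (m + 1)) hcount).trans (choose_add_succ_mul n m)

/-- Marginal uniformity of placements: under a uniformly random `n`-element treated
subset `Z` of `Fin N`, `N = n + m`, for each `j ∈ {0, …, m}` the expected number of
treated units whose placement equals `j` is `n / (m + 1)`. -/
theorem expected_count_placement_eq
    (n m N : ℕ) (hn : 1 ≤ n) (hm : 1 ≤ m) (hN : N = n + m)
    (r : Fin N → ℝ) (hr : Function.Injective r)
    (j : ℕ) (hj : j ≤ m) :
    (∑ Z ∈ (Finset.univ : Finset (Fin N)).powersetCard n,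
        ((Z.filter (fun i => ((Zᶜ).filter (fun l => r l < r i)).card = j)).card : ℚ))
        / (N.choose n : ℚ)
      = (n : ℚ) / ((m : ℚ) + 1) :=
  expected_count_placement_eq_general n m N hN r hr j hj
end
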